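/- Let d ≥ 2 and let C ⊂ ℝ^d be a strictly convex analytic body with 0 in its interior, with support function P(t) = sup_{x∈C}(t,x). Let m_1, …, m_K be pairwise distinct elements of 𝒵 ⊂ ℤ^{d+1} and let l_1, …, l_K be real numbers. If Σ_{i=1}^K l_i · P( (m_i,x), (m_i,y), 0, …, 0 ) = 0 for all x, y ∈ ℝ^{d+1}, then l_1 = ⋯ = l_K = 0. (Here P is applied to the vector of ℝ^d whose first two coordinates are (m_i,x) and (m_i,y) and whose remaining d−2 coordinates are 0, and (m,x) is the standard inner product on ℝ^{d+1}.) -/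

import Mathlib

/-! Suppose `l i₀ ≠ 0`. Two distinct primitive vectors with positive leading coordinate are
not proportional, so some `a` is orthogonal to `m i₀` but to no other `m i`. Put `x = a` and
`y = s • e_j` with `m i₀ j ≠ 0`. The `i₀`-th term becomes `l i₀ * P (s • (0, m i₀ j))`, and on
a line through the origin `P` is `α s + β |s|` with `2β` the (positive) width of `C`, so this
term is not differentiable at `s = 0`. Every other term is `P` along an affine line avoiding
the origin, where `P` is analytic. -/

open MeasureTheory Filter Pointwise
open scoped ENNReal RealInnerProductSpace Real

noncomputable section

abbrev Torus (d : ℕ) := Fin d → AddCircle (1 : ℝ)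

def torusProj {d : ℕ} (v : EuclideanSpace ℝ (Fin d)) : Torus d :=
  fun i => (v i : AddCircle (1 : ℝ))

def suppFn {d : ℕ} (C : Set (EuclideanSpace ℝ (Fin d))) (t : EuclideanSpace ℝ (Fin d)) : ℝ :=
  sSup ((fun x => (inner ℝ t x : ℝ)) '' C)

structure StrictlyConvexAnalyticBody (d : ℕ) where
  carrier : Set (EuclideanSpace ℝ (Fin d))
  isCompact : IsCompact carrier
  convex : Convex ℝ carrier
  nonemptyInterior : (interior carrier).Nonempty
  strictConvex : StrictConvex ℝ carrier
  analyticSupport : AnalyticOnNhd ℝ (suppFn carrier) {(0 : EuclideanSpace ℝ (Fin d))}ᶜ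
  posCurvature : ∀ t w : EuclideanSpace ℝ (Fin d), t ≠ 0 → w ≠ 0 → (inner ℝ t w : ℝ) = 0 →
    0 < iteratedDeriv 2 (fun s : ℝ => suppFn carrier (t + s • w)) 0

def discrepancy (d : ℕ) (C : Set (EuclideanSpace ℝ (Fin d))) (r : ℝ)
    (α x : Torus d) (N : ℕ) : ℝ :=
  (∑ n ∈ Finset.range N,
    Set.indicator (torusProj '' (r • C)) (fun _ => (1:ℝ)) (x + n • α))
    - N * (volume (r • C)).toReal

def lamMeasure (d : ℕ) (a b : ℝ) : Measure (ℝ × Torus d × Torus d) :=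
  ((volume (Set.Icc a b))⁻¹ • volume.restrict (Set.Icc a b)).prod
    ((volume : Measure (Torus d)).prod (volume : Measure (Torus d)))


/-- The vector `(u, v, 0, …, 0)` of `ℝ^d`. -/
def pairVec (d : ℕ) (u v : ℝ) : EuclideanSpace ℝ (Fin d) :=
  (EuclideanSpace.equiv (Fin d) ℝ).symm
    (fun i => if (i : ℕ) = 0 then u else if (i : ℕ) = 1 then v else 0)

/-- The set `𝒵` of primitive vectors of `ℤ^{d+1}` whose first nonzero coordinate
is positive. -/
def ZSet (d : ℕ) : Set (Fin (d+1) → ℤ) :=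
  {m | Finset.univ.gcd m = 1 ∧ ∀ i, (∀ j, j < i → m j = 0) → 0 ≤ m i}

def dotInt {n : ℕ} (m : Fin n → ℤ) (x : Fin n → ℝ) : ℝ := ∑ j, (m j : ℝ) * x j

section SupportFunction

variable {d : ℕ} {C : Set (EuclideanSpace ℝ (Fin d))}

lemma inner_le_suppFn (hC : IsCompact C) (t : EuclideanSpace ℝ (Fin d))
    {x : EuclideanSpace ℝ (Fin d)} (hx : x ∈ C) : ⟪t, x⟫ ≤ suppFn C t :=
  le_csSup (hC.image (continuous_const.inner continuous_id)).bddAbove (Set.mem_image_of_mem _ hx)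

lemma suppFn_smul_of_nonneg (hC : IsCompact C) (hne : C.Nonempty) {c : ℝ} (hc : 0 ≤ c)
    (t : EuclideanSpace ℝ (Fin d)) : suppFn C (c • t) = c * suppFn C t := by
  have himage : (fun x => ⟪c • t, x⟫) '' C = (c * ·) '' ((fun x => ⟪t, x⟫) '' C) := by
    rw [← Set.image_comp]
    exact Set.image_congr fun x _ => real_inner_smul_left t x c
  rw [suppFn, suppFn, himage]
  exact ((monotone_mul_left_of_nonneg hc).map_csSup_of_continuousAt
    (continuous_const_mul c).continuousAt (hne.image _)
    (hC.image (continuous_const.inner continuous_id)).bddAbove).symm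

lemma suppFn_add_suppFn_neg_pos (hC : IsCompact C) (hint : (interior C).Nonempty)
    {t : EuclideanSpace ℝ (Fin d)} (ht : t ≠ 0) : 0 < suppFn C t + suppFn C (-t) := by
  obtain ⟨x, hx⟩ := hint
  obtain ⟨ε, hε, hball⟩ := Metric.isOpen_iff.1 isOpen_interior x hx
  set δ := ε / (2 * ‖t‖)
  have hδ : 0 < δ := by positivity
  have hδt : δ * ‖t‖ = ε / 2 := by
    simp only [δ]
    field_simp
  have hmem : ∀ σ : ℝ, |σ| = 1 → x + (σ * δ) • t ∈ C := fun σ hσ =>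
    interior_subset <| hball <| by
      rw [Metric.mem_ball, dist_self_add_left, norm_smul, Real.norm_eq_abs, abs_mul, hσ,
        abs_of_pos hδ, one_mul, hδt]
      linarith
  have h₁ := inner_le_suppFn hC t (hmem 1 abs_one)
  have h₂ := inner_le_suppFn hC (-t) (hmem (-1) (by simp))
  simp only [inner_add_right, inner_smul_right, inner_neg_left, real_inner_self_eq_norm_sq]
    at h₁ h₂
  have : 0 < δ * ‖t‖ ^ 2 := by positivity
  linarith

lemma suppFn_smul_eq (hC : IsCompact C) (hne : C.Nonempty) (t : EuclideanSpace ℝ (Fin d))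
    (s : ℝ) : suppFn C (s • t) = (suppFn C t - suppFn C (-t)) / 2 * s
      + (suppFn C t + suppFn C (-t)) / 2 * |s| := by
  rcases le_or_gt 0 s with hs | hs
  · rw [suppFn_smul_of_nonneg hC hne hs, abs_of_nonneg hs]
    ring
  · rw [show s • t = (-s) • -t by rw [neg_smul_neg],
      suppFn_smul_of_nonneg hC hne (by linarith), abs_of_neg hs]
    ring

theorem not_differentiableAt_suppFn_smul (hC : IsCompact C) (hint : (interior C).Nonempty)
    {t : EuclideanSpace ℝ (Fin d)} (ht : t ≠ 0) :
    ¬ DifferentiableAt ℝ (fun s : ℝ => suppFn C (s • t)) 0 := by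
  intro hdiff
  set α := (suppFn C t - suppFn C (-t)) / 2
  set β := (suppFn C t + suppFn C (-t)) / 2
  have hβ : β ≠ 0 := by have := suppFn_add_suppFn_neg_pos hC hint ht; positivity
  have habs : (abs : ℝ → ℝ) = fun s : ℝ => β⁻¹ * (suppFn C (s • t) - α * s) := by
    funext s
    rw [suppFn_smul_eq hC (hint.mono interior_subset), add_sub_cancel_left,
      inv_mul_cancel_left₀ hβ]
  refine not_differentiableAt_abs_zero ?_
  rw [habs]
  exact (hdiff.sub (differentiableAt_id.const_mul α)).const_mul β⁻¹

end SupportFunction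

theorem StrictlyConvexAnalyticBody.differentiableAt_suppFn_add_smul {d : ℕ}
    (C : StrictlyConvexAnalyticBody d) {u : EuclideanSpace ℝ (Fin d)} (hu : u ≠ 0)
    (v : EuclideanSpace ℝ (Fin d)) :
    DifferentiableAt ℝ (fun s : ℝ => suppFn C.carrier (u + s • v)) 0 := by
  have hC : DifferentiableAt ℝ (suppFn C.carrier) (u + (0 : ℝ) • v) := by
    rw [zero_smul, add_zero]
    exact (C.analyticSupport u hu).differentiableAt
  exact hC.comp (f := fun s : ℝ => u + s • v) 0
    ((differentiableAt_const u).add (differentiableAt_id.smul_const v))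

section PairVec

variable {d : ℕ}

lemma pairVec_apply (u v : ℝ) (i : Fin d) :
    pairVec d u v i = if (i : ℕ) = 0 then u else if (i : ℕ) = 1 then v else 0 := rfl

lemma pairVec_mul_right (u s v : ℝ) :
    pairVec d u (s * v) = pairVec d u 0 + s • pairVec d 0 v := by
  ext i
  simp only [PiLp.add_apply, PiLp.smul_apply, smul_eq_mul, pairVec_apply]
  split_ifs <;> ring

lemma pairVec_zero : pairVec d 0 0 = 0 := by
  ext i
  simp [pairVec_apply]

lemma pairVec_ne_zero (hd : 2 ≤ d) {u v : ℝ} (huv : u ≠ 0 ∨ v ≠ 0) :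
    pairVec d u v ≠ 0 := by
  intro h
  have h₀ := congrArg (· ⟨0, by omega⟩) h
  have h₁ := congrArg (· ⟨1, by omega⟩) h
  simp only [pairVec_apply, PiLp.zero_apply] at h₀ h₁
  simp_all

end PairVec

lemma eq_or_eq_neg_of_mul_eq_mul_of_gcd_eq_one {ι : Type*} [Fintype ι] {a b : ι → ℤ}
    (ha : Finset.univ.gcd a = 1) (hb : Finset.univ.gcd b = 1) {p q : ℤ} (hp : p ≠ 0)
    (h : ∀ j, p * b j = q * a j) : b = a ∨ b = -a := by
  have hpq : |p| = |q| := by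
    have := congrArg Finset.univ.gcd (funext h : (fun j => p * b j) = fun j => q * a j)
    rwa [Finset.gcd_mul_left, Finset.gcd_mul_left, ha, hb, mul_one, mul_one,
      ← Int.abs_eq_normalize, ← Int.abs_eq_normalize] at this
  rcases abs_eq_abs.1 hpq with rfl | rfl
  · exact .inl <| funext fun j => mul_left_cancel₀ hp (h j)
  · exact .inr <| funext fun j => mul_left_cancel₀ hp (by rw [h j, Pi.neg_apply]; ring)

def dotIntDual {n : ℕ} (m : Fin n → ℤ) : Module.Dual ℝ (Fin n → ℝ) where
  toFun := dotInt m
  map_add' x y := by simp only [dotInt, Pi.add_apply, mul_add, Finset.sum_add_distrib]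
  map_smul' c x := by
    simp only [dotInt, Pi.smul_apply, smul_eq_mul, RingHom.id_apply, Finset.mul_sum]
    exact Finset.sum_congr rfl fun _ _ => by ring

@[simp]
lemma dotIntDual_apply {n : ℕ} (m : Fin n → ℤ) (x : Fin n → ℝ) :
    dotIntDual m x = dotInt m x := rfl

lemma dotInt_smul {n : ℕ} (m : Fin n → ℤ) (s : ℝ) (x : Fin n → ℝ) :
    dotInt m (s • x) = s * dotInt m x :=
  (dotIntDual m).map_smul s x

lemma dotInt_single {n : ℕ} (m : Fin n → ℤ) (j : Fin n) : dotInt m (Pi.single j 1) = m j := by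
  simp [dotInt, Pi.single_apply]

namespace ZSet

variable {n : ℕ} {a b : Fin (n+1) → ℤ}

lemma ne_zero (ha : a ∈ ZSet n) : a ≠ 0 := by
  rintro rfl
  exact zero_ne_one ((Finset.gcd_eq_zero_iff.2 fun _ _ => rfl).symm.trans ha.1)

lemma neg_notMem (ha : a ∈ ZSet n) : -a ∉ ZSet n := by
  intro hna
  refine ne_zero ha (funext fun i => ?_)
  induction i using WellFoundedLT.induction with
  | _ i ih =>
    have h₁ := ha.2 i ih
    have h₂ := hna.2 i fun j hj => by simp [ih j hj]
    simp only [Pi.neg_apply, Left.nonneg_neg_iff] at h₂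
    simp only [Pi.zero_apply]
    omega

lemma exists_dotInt_eq_zero_ne_zero (ha : a ∈ ZSet n) (hb : b ∈ ZSet n) (hab : a ≠ b) :
    ∃ x, dotInt a x = 0 ∧ dotInt b x ≠ 0 := by
  by_contra! hcon
  obtain ⟨c, hc⟩ : ∃ c : ℝ, c • dotIntDual a = dotIntDual b := by
    have := mem_span_of_iInf_ker_le_ker (ι := Unit) (L := fun _ => dotIntDual a)
      (K := dotIntDual b) (by rw [iInf_const]; exact fun x hx => hcon x hx)
    simpa [Set.range_const, Submodule.mem_span_singleton] using this
  have hprop : ∀ j, (b j : ℝ) = c * a j := fun j => by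
    simpa [dotInt_single] using (congrArg (· (Pi.single j 1)) hc).symm
  obtain ⟨j₀, hj₀⟩ := Function.ne_iff.1 (ne_zero ha)
  have hcross : ∀ j, a j₀ * b j = b j₀ * a j := fun j => by
    exact_mod_cast (by rw [hprop, hprop]; ring : (a j₀ : ℝ) * b j = b j₀ * a j)
  rcases eq_or_eq_neg_of_mul_eq_mul_of_gcd_eq_one ha.1 hb.1 hj₀ hcross with h | h
  · exact hab h.symm
  · exact neg_notMem ha (h ▸ hb)

lemma exists_dotInt_eq_zero_forall_ne_zero {ι : Type*} [Finite ι] (ha : a ∈ ZSet n)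
    {b : ι → Fin (n+1) → ℤ} (hb : ∀ i, b i ∈ ZSet n) (hab : ∀ i, a ≠ b i) :
    ∃ x, dotInt a x = 0 ∧ ∀ i, dotInt (b i) x ≠ 0 := by
  simpa using Module.Dual.exists_forall_mem_ne_zero_of_forall_exists
    (LinearMap.ker (dotIntDual a)) (fun i => dotIntDual (b i))
    fun i => by simpa using exists_dotInt_eq_zero_ne_zero ha (hb i) (hab i)

end ZSet

theorem support_function_combinations_independent_general
    (d : ℕ) (hd : 2 ≤ d) (C : StrictlyConvexAnalyticBody d)
    (K : ℕ) (m : Fin K → (Fin (d+1) → ℤ)) (hm : ∀ i, m i ∈ ZSet d)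
    (hinj : Function.Injective m) (l : Fin K → ℝ)
    (h : ∀ x y : Fin (d+1) → ℝ,
      ∑ i, l i * suppFn C.carrier (pairVec d (dotInt (m i) x) (dotInt (m i) y)) = 0) :
    ∀ i, l i = 0 := by
  intro i₀
  by_contra hl
  obtain ⟨j, hj⟩ := Function.ne_iff.1 (ZSet.ne_zero (hm i₀))
  obtain ⟨a, ha₀, ha⟩ := ZSet.exists_dotInt_eq_zero_forall_ne_zero (hm i₀)
    (b := fun i : {i // i ≠ i₀} => m i) (fun i => hm i) (fun i => hinj.ne i.2.symm)
  have hisolate : (fun s : ℝ => suppFn C.carrier (s • pairVec d 0 (m i₀ j))) = fun s =>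
      -(l i₀)⁻¹ * ∑ i : {i // i ≠ i₀},
        l i * suppFn C.carrier (pairVec d (dotInt (m i) a) 0 + s • pairVec d 0 (m i j)) := by
    funext s
    have hs := h a (s • Pi.single j 1)
    rw [Fintype.sum_eq_add_sum_subtype_ne _ i₀] at hs
    simp only [dotInt_smul, ha₀, dotInt_single, pairVec_mul_right, pairVec_zero, zero_add] at hs
    field_simp
    linear_combination hs
  refine not_differentiableAt_suppFn_smul C.isCompact C.nonemptyInterior
    (pairVec_ne_zero (u := 0) hd (.inr (Int.cast_ne_zero.2 hj))) ?_
  rw [hisolate]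
  exact (DifferentiableAt.fun_sum fun i _ => (C.differentiableAt_suppFn_add_smul
    (pairVec_ne_zero hd (.inl (ha i))) _).const_mul (l i)).const_mul _

theorem support_function_combinations_independent
    (d : ℕ) (hd : 2 ≤ d) (C : StrictlyConvexAnalyticBody d)
    (h0 : (0 : EuclideanSpace ℝ (Fin d)) ∈ interior C.carrier)
    (K : ℕ) (m : Fin K → (Fin (d+1) → ℤ)) (hm : ∀ i, m i ∈ ZSet d)
    (hinj : Function.Injective m) (l : Fin K → ℝ)
    (h : ∀ x y : Fin (d+1) → ℝ,
      ∑ i, l i * suppFn C.carrier (pairVec d (dotInt (m i) x) (dotInt (m i) y)) = 0) :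
    ∀ i, l i = 0 :=
  support_function_combinations_independent_general d hd C K m hm hinj l h

end
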